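/- arXiv:1203.3705 — 7 statements merged into one kernel-verified Lean document; each statement's English description precedes it below -/
import Mathlib

section
/- If σ' is a solution of the equation obtained from U = V by replacing every occurrence of a fixed word w ∈ Γ⁺ (in both U and V) with a fresh letter c not occurring in U, V, or any σ'(X), then the substitution σ obtained from σ' by replacing every occurrence of c with w (in each σ'(X)) is a solution of U = V. -/
variable {Γ 𝒳 : Type*}

def subApp (σ : 𝒳 → List Γ) (w : List (Γ ⊕ 𝒳)) : List Γ :=
  w.flatMap (Sum.elim (fun a => [a]) σ)

/-- Greedily (leftmost) replace all occurrences of the pattern `p` by `r`. -/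
def replAllBy {α : Type*} [DecidableEq α] (p r : List α) : List α → List α
  | [] => []
  | x :: xs =>
    if h : p <+: (x :: xs) ∧ p ≠ [] then
      r ++ replAllBy p r ((x :: xs).drop p.length)
    else
      x :: replAllBy p r xs
termination_by l => l.length
decreasing_by
  · have hp : 0 < p.length := List.length_pos_iff.mpr h.2
    simp only [List.length_drop]
    simp only [List.length_cons]
    omega
  · simp

/-!
Write `ρ` for the letter map `c ↦ w`. As `c` occurs in no `σ' X`, the substitution `σ` is `σ'`.
The morphism `ρ ∘ σ'` sends the pattern `w` (which can only match where `c ∉ w`, as `c` does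
not occur in `U`) and its replacement `c` to the same word `w`, so it takes the same value on
`U` and on its replaced form `U'`; and `ρ` fixes `σ' (U)`, which does not contain `c`.
Hence `σ (U) = ρ (σ' (U')) = ρ (σ' (V')) = σ (V)`.
-/

theorem flatMap_replAllBy {α β : Type*} [DecidableEq α] (f : α → List β) {p r : List α}
    (l : List α) (hpr : p <:+: l → p.flatMap f = r.flatMap f) :
    (replAllBy p r l).flatMap f = l.flatMap f := by
  induction l using replAllBy.induct p with
  | case1 => simp [replAllBy]
  | case2 x xs hmatch ih =>
    obtain ⟨t, ht⟩ := hmatch.1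
    have hdrop : (x :: xs).drop p.length = t := by rw [← ht, List.drop_left]
    have hp : p <:+: x :: xs := ht ▸ (List.prefix_append p t).isInfix
    have ht' : t <:+: x :: xs := ht ▸ (List.suffix_append p t).isInfix
    rw [hdrop] at ih
    rw [replAllBy, dif_pos hmatch, hdrop, List.flatMap_append, ih fun h => hpr (h.trans ht'),
      ← hpr hp, ← List.flatMap_append, ht]
  | case3 x xs hnomatch ih =>
    rw [replAllBy, dif_neg hnomatch, List.flatMap_cons, List.flatMap_cons,
      ih fun h => hpr (h.trans (List.suffix_cons x xs).isInfix)]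

theorem flatMap_ite_eq_self {α : Type*} [DecidableEq α] {c : α} (w : List α) {l : List α}
    (hc : c ∉ l) : l.flatMap (fun x => if x = c then w else [x]) = l := by
  rw [List.flatMap_congr fun x hx => if_neg (ne_of_mem_of_not_mem hx hc), List.flatMap_singleton']

theorem not_mem_subApp {σ : 𝒳 → List Γ} {U : List (Γ ⊕ 𝒳)} {c : Γ} (hU : Sum.inl c ∉ U)
    (hσ : ∀ X, c ∉ σ X) : c ∉ subApp σ U := by
  simp only [subApp, List.mem_flatMap, not_exists, not_and]
  rintro (a | X) hx
  · simpa using (ne_of_mem_of_not_mem hx hU).symm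
  · exact hσ X

theorem subApp_map_inl (σ : 𝒳 → List Γ) (w : List Γ) : subApp σ (w.map Sum.inl) = w := by
  simp [subApp, List.flatMap_map]

theorem flatMap_subApp_replAllBy [DecidableEq Γ] [DecidableEq 𝒳] (σ : 𝒳 → List Γ)
    (w : List Γ) {c : Γ} {U : List (Γ ⊕ 𝒳)} (hc : c ∉ subApp σ U) :
    (subApp σ (replAllBy (w.map Sum.inl) [Sum.inl c] U)).flatMap
      (fun x => if x = c then w else [x]) = subApp σ U := by
  have hw : w.map Sum.inl <:+: U → c ∉ w := fun h hcw => by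
    have hinf : subApp σ (w.map Sum.inl) <:+: subApp σ U := h.flatMap _
    exact hc ((subApp_map_inl σ w ▸ hinf).subset hcw)
  unfold subApp at hc ⊢
  rw [List.flatMap_assoc, flatMap_replAllBy, ← List.flatMap_assoc, flatMap_ite_eq_self w hc]
  intro h
  rw [List.flatMap_map]
  simp [flatMap_ite_eq_self w (hw h)]

theorem stmt1_general [DecidableEq Γ] [DecidableEq 𝒳]
    (U V : List (Γ ⊕ 𝒳)) (w : List Γ) (c : Γ)
    (σ' : 𝒳 → List Γ)
    (hfreshU : Sum.inl c ∉ U) (hfreshV : Sum.inl c ∉ V)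
    (hfreshσ : ∀ X : 𝒳, c ∉ σ' X)
    (hsol : subApp σ' (replAllBy (w.map Sum.inl) [Sum.inl c] U) =
            subApp σ' (replAllBy (w.map Sum.inl) [Sum.inl c] V)) :
    subApp (fun X => (σ' X).flatMap (fun x => if x = c then w else [x])) U =
      subApp (fun X => (σ' X).flatMap (fun x => if x = c then w else [x])) V := by
  have hσ : (fun X => (σ' X).flatMap (fun x => if x = c then w else [x])) = σ' :=
    funext fun X => flatMap_ite_eq_self w (hfreshσ X)
  rw [hσ, ← flatMap_subApp_replAllBy σ' w (not_mem_subApp hfreshU hfreshσ),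
    ← flatMap_subApp_replAllBy σ' w (not_mem_subApp hfreshV hfreshσ), hsol]

/-- If σ' solves the equation obtained from U = V by greedily replacing every
occurrence of the word w by a fresh letter c (c occurring nowhere in U, V, or any σ'(X)),
then σ, obtained from σ' by replacing every c by w inside the images of variables,
solves U = V. -/
theorem stmt1 [DecidableEq Γ] [DecidableEq 𝒳]
    (U V : List (Γ ⊕ 𝒳)) (w : List Γ) (hw : w ≠ []) (c : Γ)
    (σ' : 𝒳 → List Γ)
    (hfreshU : Sum.inl c ∉ U) (hfreshV : Sum.inl c ∉ V)
    (hfreshσ : ∀ X : 𝒳, c ∉ σ' X)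
    (hsol : subApp σ' (replAllBy (w.map Sum.inl) [Sum.inl c] U) =
            subApp σ' (replAllBy (w.map Sum.inl) [Sum.inl c] V)) :
    subApp (fun X => (σ' X).flatMap (fun x => if x = c then w else [x])) U =
      subApp (fun X => (σ' X).flatMap (fun x => if x = c then w else [x])) V :=
  stmt1_general U V w c σ' hfreshU hfreshV hfreshσ hsol
end

section
/- Let σ be a length-minimal solution of the word equation U = V and let a ≠ b be letters such that ab occurs as a factor of σ(U). Then ab is either an explicit pair (some occurrence of ab in σ(U) arises entirely from explicit letters of U or V) or a crossing pair (some occurrence overlaps the boundary of a substituted variable). Equivalently: ab cannot have only implicit occurrences. -/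
variable {Γ 𝒳 : Type*}

/-- The pattern `p` occurs in `s` at position `i`. -/
def occursAt (s p : List Γ) (i : ℕ) : Prop :=
  i + p.length ≤ s.length ∧ (s.drop i).take p.length = p

/-- The occurrence of a factor of length `len` at position `i` of `subApp σ U`
is implicit: it lies entirely inside `σ X` for a single occurrence of a variable X. -/
def implicitAt (σ : 𝒳 → List Γ) (U : List (Γ ⊕ 𝒳)) (i len : ℕ) : Prop :=
  ∃ (j : ℕ) (X : 𝒳), U[j]? = some (Sum.inr X) ∧
    (subApp σ (U.take j)).length ≤ i ∧ i + len ≤ (subApp σ (U.take (j + 1))).length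

/-!
If every occurrence of `ab` in `σ(U) = σ(V)` lies inside some `σ(X)`, contract each `ab` to `a`
(greedily, left to right) in every `σ(X)`. No occurrence straddles the boundary between the images
of two consecutive symbols, so this contraction commutes with substitution: the new assignment is
again a solution, and it is strictly shorter since `ab` occurs at all. Contracting to `a` rather
than deleting `ab` keeps every `σ(X)` nonempty.
-/

theorem occursAt_cons_succ (x : Γ) (s p : List Γ) (i : ℕ) :
    occursAt (x :: s) p (i + 1) ↔ occursAt s p i := by
  simp only [occursAt, List.length_cons, List.drop_succ_cons]
  exact and_congr_left' (by omega)

section Contraction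

variable [DecidableEq Γ] (a b : Γ)

def contractPair : List Γ → List Γ
  | [] => []
  | [x] => [x]
  | x :: y :: t => if x = a ∧ y = b then a :: contractPair t else x :: contractPair (y :: t)

theorem contractPair_ne_nil {w : List Γ} (hw : w ≠ []) : contractPair a b w ≠ [] := by
  match w with
  | [x] => simp [contractPair]
  | x :: y :: t => rw [contractPair]; split <;> simp

theorem length_contractPair_le (w : List Γ) : (contractPair a b w).length ≤ w.length := by
  induction w using contractPair.induct a b with
  | case1 | case2 => simp [contractPair]
  | case3 x y t h ih => rw [contractPair, if_pos h]; simp only [List.length_cons]; omega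
  | case4 x y t h ih => rw [contractPair, if_neg h]; simp only [List.length_cons] at ih ⊢; omega

theorem length_contractPair_lt {w : List Γ} {i : ℕ} (h : occursAt w [a, b] i) :
    (contractPair a b w).length < w.length := by
  induction w using contractPair.induct a b generalizing i with
  | case1 | case2 => simp [occursAt] at h
  | case3 x y t hxy ih =>
    have := length_contractPair_le a b t
    rw [contractPair, if_pos hxy]; simp only [List.length_cons]; omega
  | case4 x y t hxy ih =>
    rw [contractPair, if_neg hxy]
    cases i with
    | zero => simp [occursAt] at h; exact absurd h hxy
    | succ i =>
      have := ih ((occursAt_cons_succ _ _ _ _).mp h)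
      simp only [List.length_cons] at this ⊢; omega

theorem contractPair_append (u v : List Γ) (h : ¬(u.getLast? = some a ∧ v.head? = some b)) :
    contractPair a b (u ++ v) = contractPair a b u ++ contractPair a b v := by
  induction u using contractPair.induct a b with
  | case1 => simp [contractPair]
  | case2 x =>
    cases v with
    | nil => simp [contractPair]
    | cons y t =>
      have hxy : ¬(x = a ∧ y = b) := by rintro ⟨rfl, rfl⟩; simp at h
      show contractPair a b (x :: y :: t) = x :: contractPair a b (y :: t)
      rw [contractPair, if_neg hxy]
  | case3 x y t hxy ih =>
    have ht : ¬(t.getLast? = some a ∧ v.head? = some b) := by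
      rintro ⟨hl, hv⟩
      exact h ⟨by simp [List.getLast?_cons, hl], hv⟩
    simp only [List.cons_append]
    rw [contractPair, if_pos hxy, contractPair, if_pos hxy, ih ht, List.cons_append]
  | case4 x y t hxy ih =>
    have hyt : ¬((y :: t).getLast? = some a ∧ v.head? = some b) := by
      rwa [← List.getLast?_cons_cons (a := x)]
    simp only [List.cons_append]
    rw [contractPair, if_neg hxy, contractPair, if_neg hxy, ← List.cons_append, ih hyt,
      List.cons_append]

end Contraction

theorem occursAt_append_right {u v p : List Γ} {k : ℕ} (h : occursAt v p k) :
    occursAt (u ++ v) p (u.length + k) := by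
  obtain ⟨hlen, hfac⟩ := h
  refine ⟨by simp; omega, ?_⟩
  rwa [List.drop_append, List.drop_eq_nil_of_le (by omega), Nat.add_sub_cancel_left,
    List.nil_append]

theorem occursAt_append_pair {u v : List Γ} {a b : Γ} (hu : u.getLast? = some a)
    (hv : v.head? = some b) : occursAt (u ++ v) [a, b] (u.length - 1) := by
  obtain ⟨u', rfl⟩ := List.getLast?_eq_some_iff.mp hu
  obtain ⟨v', rfl⟩ : ∃ v', v = b :: v' := by
    cases v with
    | nil => simp at hv
    | cons c v' => simp only [List.head?_cons, Option.some.injEq] at hv; exact ⟨v', by rw [hv]⟩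
  refine ⟨by simp, ?_⟩
  simp [List.append_assoc]

theorem subApp_cons (σ : 𝒳 → List Γ) (x : Γ ⊕ 𝒳) (U : List (Γ ⊕ 𝒳)) :
    subApp σ (x :: U) = subApp σ [x] ++ subApp σ U := by
  simp [subApp]

theorem implicitAt_cons {σ : 𝒳 → List Γ} {x : Γ ⊕ 𝒳} {U : List (Γ ⊕ 𝒳)}
    {i len : ℕ} (h : implicitAt σ (x :: U) i len) :
    i + len ≤ (subApp σ [x]).length ∨
      (subApp σ [x]).length ≤ i ∧ implicitAt σ U (i - (subApp σ [x]).length) len := by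
  obtain ⟨j, X, hj, hlo, hhi⟩ := h
  cases j with
  | zero => exact Or.inl hhi
  | succ j =>
    rw [List.take_succ_cons, subApp_cons, List.length_append] at hlo hhi
    exact Or.inr ⟨by omega, j, X, by simpa using hj, by omega, by omega⟩

theorem subApp_contractPair [DecidableEq Γ] (a b : Γ) (σ : 𝒳 → List Γ)
    (U : List (Γ ⊕ 𝒳)) (himp : ∀ k, occursAt (subApp σ U) [a, b] k → implicitAt σ U k 2) :
    subApp (contractPair a b ∘ σ) U = contractPair a b (subApp σ U) := by
  induction U with
  | nil => simp [subApp, contractPair]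
  | cons x U ih =>
    have hx : subApp (contractPair a b ∘ σ) [x] = contractPair a b (subApp σ [x]) := by
      cases x <;> simp [subApp, contractPair]
    have hboundary : ¬((subApp σ [x]).getLast? = some a ∧ (subApp σ U).head? = some b) := by
      rintro ⟨hl, hh⟩
      have hpos : 0 < (subApp σ [x]).length :=
        List.length_pos_iff.mpr (by rintro hnil; simp [hnil] at hl)
      have := implicitAt_cons (himp _ (subApp_cons σ x U ▸ occursAt_append_pair hl hh))
      omega
    have htail : ∀ k, occursAt (subApp σ U) [a, b] k → implicitAt σ U k 2 := fun k hk => by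
      have hk' := himp _ (subApp_cons σ x U ▸ occursAt_append_right hk)
      simpa using ((implicitAt_cons hk').resolve_left (by omega)).2
    rw [subApp_cons _ x U, subApp_cons _ x U, hx, contractPair_append a b _ _ hboundary,
      ih htail]

theorem stmt2_general (U V : List (Γ ⊕ 𝒳)) (σ : 𝒳 → List Γ)
    (hsol : subApp σ U = subApp σ V)
    (hne : ∀ X : 𝒳, σ X ≠ [])
    (hmin : ∀ σ' : 𝒳 → List Γ, (∀ X : 𝒳, σ' X ≠ []) → subApp σ' U = subApp σ' V →
      (subApp σ U).length ≤ (subApp σ' U).length)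
    (a b : Γ)
    (i : ℕ) (hocc : occursAt (subApp σ U) [a, b] i) :
    (∃ k, occursAt (subApp σ U) [a, b] k ∧ ¬ implicitAt σ U k 2) ∨
    (∃ k, occursAt (subApp σ V) [a, b] k ∧ ¬ implicitAt σ V k 2) := by
  classical
  by_contra! hall
  obtain ⟨hU, hV⟩ := hall
  have hU' := subApp_contractPair a b σ U hU
  have hshorter := hmin (contractPair a b ∘ σ) (fun X => contractPair_ne_nil a b (hne X))
    (by rw [hU', subApp_contractPair a b σ V hV, hsol])
  have hlt := length_contractPair_lt a b hocc
  rw [hU'] at hshorter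
  omega

/-- For a length-minimal solution σ of U = V, any pair ab (a ≠ b) occurring in σ(U)
has an occurrence in σ(U) or σ(V) that is not implicit (i.e., explicit or crossing). -/
theorem stmt2 (U V : List (Γ ⊕ 𝒳)) (σ : 𝒳 → List Γ)
    (hsol : subApp σ U = subApp σ V)
    (hne : ∀ X : 𝒳, σ X ≠ [])
    (hmin : ∀ σ' : 𝒳 → List Γ, (∀ X : 𝒳, σ' X ≠ []) → subApp σ' U = subApp σ' V →
      (subApp σ U).length ≤ (subApp σ' U).length)
    (a b : Γ) (hab : a ≠ b)
    (i : ℕ) (hocc : occursAt (subApp σ U) [a, b] i) :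
    (∃ k, occursAt (subApp σ U) [a, b] k ∧ ¬ implicitAt σ U k 2) ∨
    (∃ k, occursAt (subApp σ V) [a, b] k ∧ ¬ implicitAt σ V k 2) :=
  stmt2_general U V σ hsol hne hmin a b i hocc
end

section
/- If substitutions σ and σ' are similar (for every variable X, the words σ(X) and σ'(X) are similar) and both are solutions-candidates for the same equation sides, then σ(U) and σ'(U) are similar words, for every side U of the equation. -/
/-!
Two words are already similar when they are products of nonempty letter powers, maximal or not,
with the same sequence of letters: merging adjacent powers of the same letter makes the blocks
maximal, and which blocks get merged depends only on the sequence of letters. Hence similarity is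
compatible with concatenation, and σ(U), σ'(U) are concatenations of pairwise similar pieces.
-/

variable {Γ 𝒳 : Type*}

def blocksWord (L : List (Γ × ℕ)) : List Γ :=
  L.flatMap (fun p => List.replicate p.2 p.1)

def goodBlocks (L : List (Γ × ℕ)) : Prop :=
  (∀ p ∈ L, 1 ≤ p.2) ∧ L.Chain' (fun p q => p.1 ≠ q.1)

def WordSimilar (w w' : List Γ) : Prop :=
  ∃ L L' : List (Γ × ℕ), goodBlocks L ∧ goodBlocks L' ∧
    L.map Prod.fst = L'.map Prod.fst ∧ w = blocksWord L ∧ w' = blocksWord L'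

section MergeBlocks

variable [DecidableEq Γ]

def consBlock (p : Γ × ℕ) : List (Γ × ℕ) → List (Γ × ℕ)
  | [] => [p]
  | q :: L => if p.1 = q.1 then (p.1, p.2 + q.2) :: L else p :: q :: L

def mergeBlocks (L : List (Γ × ℕ)) : List (Γ × ℕ) :=
  L.foldr consBlock []

theorem blocksWord_consBlock (p : Γ × ℕ) (L : List (Γ × ℕ)) :
    blocksWord (consBlock p L) = List.replicate p.2 p.1 ++ blocksWord L := by
  cases L with
  | nil => simp [consBlock, blocksWord]
  | cons q L =>
    simp only [consBlock]
    split_ifs with hpq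
    · obtain ⟨a, m⟩ := p
      obtain ⟨b, n⟩ := q
      dsimp only at hpq
      subst hpq
      simp [blocksWord, ← List.append_assoc]
    · simp [blocksWord]

theorem goodBlocks_consBlock {p : Γ × ℕ} {L : List (Γ × ℕ)} (hp : 1 ≤ p.2)
    (hL : goodBlocks L) : goodBlocks (consBlock p L) := by
  obtain ⟨hpos, hchain : L.IsChain _⟩ := hL
  cases L with
  | nil => exact ⟨by simp [consBlock, hp], List.isChain_singleton p⟩
  | cons q L =>
    simp only [List.mem_cons, forall_eq_or_imp] at hpos
    by_cases hpq : p.1 = q.1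
    · simp only [consBlock, if_pos hpq]
      refine ⟨?_, ?_⟩
      · simp only [List.mem_cons, forall_eq_or_imp]
        exact ⟨by omega, hpos.2⟩
      cases L with
      | nil => exact List.isChain_singleton _
      | cons r L =>
        rw [List.isChain_cons_cons] at hchain
        exact List.isChain_cons_cons.mpr ⟨hpq ▸ hchain.1, hchain.2⟩
    · simp only [consBlock, if_neg hpq]
      refine ⟨?_, List.isChain_cons_cons.mpr ⟨hpq, hchain⟩⟩
      simp only [List.mem_cons, forall_eq_or_imp]
      exact ⟨hp, hpos⟩

theorem map_fst_consBlock_congr {p p' : Γ × ℕ} {L L' : List (Γ × ℕ)} (hp : p.1 = p'.1)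
    (hL : L.map Prod.fst = L'.map Prod.fst) :
    (consBlock p L).map Prod.fst = (consBlock p' L').map Prod.fst := by
  cases L with
  | nil => cases L' <;> simp_all [consBlock]
  | cons q L =>
    cases L' with
    | nil => simp at hL
    | cons q' L' =>
      simp only [List.map_cons, List.cons.injEq] at hL
      obtain ⟨hq, hL⟩ := hL
      simp only [consBlock, ← hp, ← hq]
      split_ifs <;> simp [hp, hq, hL]

theorem blocksWord_mergeBlocks (L : List (Γ × ℕ)) :
    blocksWord (mergeBlocks L) = blocksWord L := by
  induction L with
  | nil => rfl
  | cons p L ih =>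
    rw [mergeBlocks, List.foldr_cons, ← mergeBlocks, blocksWord_consBlock, ih]
    simp [blocksWord]

theorem goodBlocks_mergeBlocks {L : List (Γ × ℕ)} (hL : ∀ p ∈ L, 1 ≤ p.2) :
    goodBlocks (mergeBlocks L) := by
  induction L with
  | nil => exact ⟨by simp [mergeBlocks], List.isChain_nil⟩
  | cons p L ih =>
    simp only [List.mem_cons, forall_eq_or_imp] at hL
    exact goodBlocks_consBlock hL.1 (ih hL.2)

theorem map_fst_mergeBlocks_congr {L L' : List (Γ × ℕ)}
    (h : L.map Prod.fst = L'.map Prod.fst) :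
    (mergeBlocks L).map Prod.fst = (mergeBlocks L').map Prod.fst := by
  induction L generalizing L' with
  | nil => rw [List.map_nil, eq_comm, List.map_eq_nil_iff] at h; simp [h]
  | cons p L ih =>
    cases L' with
    | nil => simp at h
    | cons p' L' =>
      simp only [List.map_cons, List.cons.injEq] at h
      exact map_fst_consBlock_congr h.1 (ih h.2)

end MergeBlocks

theorem WordSimilar.of_blocks {w w' : List Γ} (L L' : List (Γ × ℕ))
    (hL : ∀ p ∈ L, 1 ≤ p.2) (hL' : ∀ p ∈ L', 1 ≤ p.2)
    (h : L.map Prod.fst = L'.map Prod.fst) (hw : w = blocksWord L) (hw' : w' = blocksWord L') :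
    WordSimilar w w' := by
  classical
  exact ⟨mergeBlocks L, mergeBlocks L', goodBlocks_mergeBlocks hL, goodBlocks_mergeBlocks hL',
    map_fst_mergeBlocks_congr h, by rw [blocksWord_mergeBlocks, hw],
    by rw [blocksWord_mergeBlocks, hw']⟩

theorem WordSimilar.refl (w : List Γ) : WordSimilar w w := by
  have hw : w = blocksWord (w.map fun a => (a, 1)) := by simp [blocksWord, List.flatMap_map]
  exact .of_blocks _ _ (by simp) (by simp) rfl hw hw

theorem WordSimilar.append {w₁ w₁' w₂ w₂' : List Γ}
    (h₁ : WordSimilar w₁ w₁') (h₂ : WordSimilar w₂ w₂') :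
    WordSimilar (w₁ ++ w₂) (w₁' ++ w₂') := by
  obtain ⟨L₁, L₁', ⟨hL₁, -⟩, ⟨hL₁', -⟩, h₁, rfl, rfl⟩ := h₁
  obtain ⟨L₂, L₂', ⟨hL₂, -⟩, ⟨hL₂', -⟩, h₂, rfl, rfl⟩ := h₂
  refine .of_blocks (L₁ ++ L₂) (L₁' ++ L₂') ?_ ?_ (by simp [h₁, h₂]) ?_ ?_
  · simpa only [List.mem_append, or_imp, forall_and] using ⟨hL₁, hL₂⟩
  · simpa only [List.mem_append, or_imp, forall_and] using ⟨hL₁', hL₂'⟩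
  all_goals simp [blocksWord]

theorem WordSimilar.flatMap {α : Type*} {l : List α} {f g : α → List Γ}
    (h : ∀ x ∈ l, WordSimilar (f x) (g x)) : WordSimilar (l.flatMap f) (l.flatMap g) := by
  induction l with
  | nil => exact .refl []
  | cons x l ih =>
    simp only [List.mem_cons, forall_eq_or_imp] at h
    simpa only [List.flatMap_cons] using h.1.append (ih h.2)

/-- If σ and σ' are similar substitutions (σ(X) is similar to σ'(X) for every
variable X occurring in U), then σ(U) and σ'(U) are similar words. -/
theorem stmt8 (U : List (Γ ⊕ 𝒳)) (σ σ' : 𝒳 → List Γ)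
    (h : ∀ X : 𝒳, Sum.inr X ∈ U → WordSimilar (σ X) (σ' X)) :
    WordSimilar (subApp σ U) (subApp σ' U) := by
  refine WordSimilar.flatMap fun x hx => ?_
  rcases x with a | X
  · exact .refl [a]
  · exact h X hx
end

section
/- Consider the nondeterministic halving procedure on a system of linear Diophantine equations over ℕ: replace each variable x by 2x + b_x for a guessed bit b_x ∈ {0,1}; reject if some equation has sides of different parity of constant terms; otherwise divide all coefficients' constant parts by 2 (floor). Then: (1) if the original system has a solution (q₁,…,q_r), then for the guesses b_i = q_i mod 2 the transformed system has solution (⌊q₁/2⌋,…,⌊q_r/2⌋); and (2) if the transformed system (for bits b₁,…,b_r) has a solution (q₁,…,q_r), then (2q₁+b₁,…,2q_r+b_r) solves the original system. -/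
open Finset

lemma stmt9_aux {r : ℕ} (f u v : Fin r → ℕ) :
    ∑ j, f j * (2 * u j + v j) = 2 * ∑ j, f j * u j + ∑ j, f j * v j := by
  rw [Finset.mul_sum, ← Finset.sum_add_distrib]
  exact Finset.sum_congr rfl fun j _ => by ring

/-- The nondeterministic halving procedure on a system of linear Diophantine equations
over ℕ (equations `Σⱼ n i j * x j + c i = Σⱼ m i j * x j + d i` indexed by `i : ι`):
(1) if the original system has a solution q, then for the bit guesses `b j = q j % 2` the
parity check passes and the halved system has solution `fun j => q j / 2`;
(2) if, for bits b passing the parity check, the halved system has solution q, then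
`fun j => 2 * q j + b j` solves the original system. -/
theorem stmt9 {r : ℕ} {ι : Type*} (n m : ι → Fin r → ℕ) (c d : ι → ℕ) :
    (∀ q : Fin r → ℕ,
      (∀ i, (∑ j, n i j * q j) + c i = (∑ j, m i j * q j) + d i) →
      (∀ i, (c i + ∑ j, n i j * (q j % 2)) % 2 = (d i + ∑ j, m i j * (q j % 2)) % 2) ∧
      (∀ i, (∑ j, n i j * (q j / 2)) + (c i + ∑ j, n i j * (q j % 2)) / 2 =
            (∑ j, m i j * (q j / 2)) + (d i + ∑ j, m i j * (q j % 2)) / 2)) ∧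
    (∀ b : Fin r → ℕ, (∀ j, b j ≤ 1) →
      (∀ i, (c i + ∑ j, n i j * b j) % 2 = (d i + ∑ j, m i j * b j) % 2) →
      ∀ q : Fin r → ℕ,
      (∀ i, (∑ j, n i j * q j) + (c i + ∑ j, n i j * b j) / 2 =
            (∑ j, m i j * q j) + (d i + ∑ j, m i j * b j) / 2) →
      ∀ i, (∑ j, n i j * (2 * q j + b j)) + c i = (∑ j, m i j * (2 * q j + b j)) + d i) := by
  constructor
  · intro q hq
    have key : ∀ (f : Fin r → ℕ) (i : ι),
        ∑ j, f j * q j = 2 * ∑ j, f j * (q j / 2) + ∑ j, f j * (q j % 2) := by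
      intro f i
      have := stmt9_aux f (fun j => q j / 2) (fun j => q j % 2)
      simpa [Nat.div_add_mod] using this
    constructor <;> intro i <;>
    · have h := hq i
      rw [key (n i) i, key (m i) i] at h
      omega
  · intro b hb hpar q hq i
    rw [stmt9_aux, stmt9_aux]
    have h1 := hpar i
    have h2 := hq i
    omega
end

section
/- Hadamard's inequality: for any real k×k matrix N = (n_{i,j}), det(N)² ≤ Π_{j=1}^{k} Σ_{i=1}^{k} n_{i,j}². -/
open Finset

/-!
Nᵀ N is positive semidefinite, its determinant is det(N)² and its diagonal entries are the squared
column norms of N, so it suffices to show det A ≤ ∏ Aᵢᵢ for positive semidefinite A. If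
Aᵢᵢ = eᵢᵀ A eᵢ vanishes then A eᵢ = 0, so det A = 0. Otherwise conjugating by the diagonal matrix
with entries Aᵢᵢ^(-1/2) reduces to unit diagonal, where AM-GM on the eigenvalues gives
det A ≤ (tr A / k)^k = 1.
-/

theorem Real.prod_le_arith_mean_pow {ι : Type*} (s : Finset ι) (z : ι → ℝ)
    (hz : ∀ i ∈ s, 0 ≤ z i) : ∏ i ∈ s, z i ≤ ((∑ i ∈ s, z i) / #s) ^ #s := by
  rcases s.eq_empty_or_nonempty with rfl | hs
  · simp
  have hcard : #s ≠ 0 := hs.card_ne_zero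
  have amgm := Real.geom_mean_le_arith_mean s (fun _ ↦ 1) z (fun _ _ ↦ zero_le_one)
    (by simpa using hs) hz
  simp only [Real.rpow_one, one_mul, sum_const, nsmul_eq_mul, mul_one] at amgm
  calc ∏ i ∈ s, z i = ((∏ i ∈ s, z i) ^ (#s : ℝ)⁻¹) ^ #s :=
        (Real.rpow_inv_natCast_pow (prod_nonneg hz) hcard).symm
    _ ≤ ((∑ i ∈ s, z i) / #s) ^ #s := by gcongr; exact Real.rpow_nonneg (prod_nonneg hz) _

namespace Matrix

variable {n : Type*} [Fintype n] [DecidableEq n]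

theorem PosSemidef.det_le_trace_div_card_pow {A : Matrix n n ℝ} (hA : A.PosSemidef) :
    A.det ≤ (A.trace / Fintype.card n) ^ Fintype.card n := by
  rw [hA.1.det_eq_prod_eigenvalues, hA.1.trace_eq_sum_eigenvalues]
  exact Real.prod_le_arith_mean_pow _ _ fun i _ ↦ hA.eigenvalues_nonneg i

open scoped ComplexOrder in
theorem PosSemidef.det_eq_zero_of_diag_eq_zero {𝕜 : Type*} [RCLike 𝕜] {A : Matrix n n 𝕜}
    (hA : A.PosSemidef) {j : n} (hj : A j j = 0) : A.det = 0 := by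
  have hcol : A *ᵥ Pi.single j 1 = 0 :=
    (hA.dotProduct_mulVec_zero_iff _).mp (by simpa [mulVec_single_one] using hj)
  exact det_eq_zero_of_column_eq_zero j fun i ↦ by
    simpa [mulVec_single_one] using congrFun hcol i

theorem PosSemidef.det_le_one_of_diag_eq_one {A : Matrix n n ℝ} (hA : A.PosSemidef)
    (hdiag : ∀ i, A i i = 1) : A.det ≤ 1 := by
  refine hA.det_le_trace_div_card_pow.trans (pow_le_one₀ ?_ ?_)
  · exact div_nonneg hA.trace_nonneg (Nat.cast_nonneg _)
  · simpa [trace, hdiag] using div_self_le_one (Fintype.card n : ℝ)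

theorem PosSemidef.det_le_prod_diag {A : Matrix n n ℝ} (hA : A.PosSemidef) :
    A.det ≤ ∏ i, A i i := by
  by_cases hzero : ∃ j, A j j = 0
  · obtain ⟨j, hj⟩ := hzero
    rw [hA.det_eq_zero_of_diag_eq_zero hj]
    exact prod_nonneg fun i _ ↦ hA.diag_nonneg
  have hpos : ∀ i, 0 < A i i := fun i ↦ hA.diag_nonneg.lt_of_ne' fun h ↦ hzero ⟨i, h⟩
  set D : Matrix n n ℝ := diagonal fun i ↦ (√(A i i))⁻¹
  have hB : (D * A * D).PosSemidef := by
    simpa [D] using hA.conjTranspose_mul_mul_same D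
  have hBdiag : ∀ i, (D * A * D) i i = 1 := fun i ↦ by
    simp only [D, diagonal_mul, mul_diagonal]
    rw [mul_right_comm, ← mul_inv, Real.mul_self_sqrt (hpos i).le, inv_mul_cancel₀ (hpos i).ne']
  have hsqrt : (∏ i, √(A i i)) * ∏ i, √(A i i) = ∏ i, A i i := by
    rw [← prod_mul_distrib]
    exact prod_congr rfl fun i _ ↦ Real.mul_self_sqrt (hpos i).le
  have hscale : (D * A * D).det * ∏ i, A i i = A.det := by
    have : ∏ i, √(A i i) ≠ 0 := (prod_pos fun i _ ↦ Real.sqrt_pos.mpr (hpos i)).ne'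
    simp only [D, det_mul, det_diagonal, prod_inv_distrib, ← hsqrt]
    field_simp
  rw [← hscale]
  exact mul_le_of_le_one_left (prod_nonneg fun i _ ↦ (hpos i).le)
    (hB.det_le_one_of_diag_eq_one hBdiag)

end Matrix

/-- Hadamard's inequality: det(N)² ≤ Π_j Σ_i n_{i,j}². -/
theorem stmt12 {k : ℕ} (N : Matrix (Fin k) (Fin k) ℝ) :
    N.det ^ 2 ≤ ∏ j, ∑ i, (N i j) ^ 2 := by
  simpa [Matrix.det_mul, Matrix.mul_apply, sq] using
    (Matrix.posSemidef_conjTranspose_mul_self N).det_le_prod_diag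
end

section
/- Popping first letters preserves solutions exactly: let U' = V' be obtained from U = V by replacing every occurrence of a variable X by b·X, and suppose σ is a solution of U = V with σ(X) = b·w for some nonempty word w. Then σ' with σ'(X) = w and σ'(Y) = σ(Y) for Y ≠ X is a solution of U' = V' with σ'(U') = σ(U). Conversely, for any solution σ' of U' = V', the substitution σ with σ(X) = b·σ'(X) (and σ = σ' elsewhere) is a solution of U = V with σ(U) = σ'(U'). -/
variable {Γ 𝒳 : Type*}

lemma key [DecidableEq Γ] [DecidableEq 𝒳] (X : 𝒳) (b : Γ) (σ τ : 𝒳 → List Γ)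
    (h1 : ∀ Y, Y ≠ X → τ Y = σ Y) (h2 : b :: τ X = σ X) (W : List (Γ ⊕ 𝒳)) :
    subApp τ (W.flatMap fun s => if s = Sum.inr X then [Sum.inl b, Sum.inr X] else [s])
      = subApp σ W := by
  induction W with
  | nil => rfl
  | cons s W ih =>
    simp only [List.flatMap_cons, subApp, List.flatMap_append] at *
    rw [ih]
    congr 1
    by_cases hs : s = Sum.inr X
    · subst hs; simp [← h2]
    · simp only [if_neg hs]
      cases s with
      | inl a => rfl
      | inr Y =>
        simp only [List.flatMap_cons, List.flatMap_nil, List.append_nil, Sum.elim_inr]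
        exact h1 Y (by simpa using hs)

/-- Popping the first letter b of σ(X): let U' = V' be U = V with every occurrence of X
replaced by b·X. (1) If σ solves U = V with σ(X) = b·w (w ≠ ε), then σ' = σ[X ↦ w]
solves U' = V' with σ'(U') = σ(U). (2) Conversely, if σ' solves U' = V', then
σ = σ'[X ↦ b·σ'(X)] solves U = V with σ(U) = σ'(U'). -/
theorem stmt17 [DecidableEq Γ] [DecidableEq 𝒳] (U V : List (Γ ⊕ 𝒳)) (X : 𝒳) (b : Γ)
    (popX : (Γ ⊕ 𝒳) → List (Γ ⊕ 𝒳))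
    (hpop : popX = fun s => if s = Sum.inr X then [Sum.inl b, Sum.inr X] else [s]) :
    (∀ (σ : 𝒳 → List Γ) (w : List Γ), w ≠ [] → σ X = b :: w →
      subApp σ U = subApp σ V →
      subApp (Function.update σ X w) (U.flatMap popX) = subApp σ U ∧
      subApp (Function.update σ X w) (U.flatMap popX) =
        subApp (Function.update σ X w) (V.flatMap popX)) ∧
    (∀ σ' : 𝒳 → List Γ,
      subApp σ' (U.flatMap popX) = subApp σ' (V.flatMap popX) →
      subApp (Function.update σ' X (b :: σ' X)) U = subApp σ' (U.flatMap popX) ∧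
      subApp (Function.update σ' X (b :: σ' X)) U =
        subApp (Function.update σ' X (b :: σ' X)) V) := by
  subst hpop
  constructor
  · intro σ w _ hXw hsol
    have h1 : ∀ Y, Y ≠ X → Function.update σ X w Y = σ Y :=
      fun Y hY => Function.update_of_ne hY _ _
    have h2 : b :: Function.update σ X w X = σ X := by
      rw [Function.update_self, hXw]
    exact ⟨key X b σ _ h1 h2 U,
      by rw [key X b σ _ h1 h2 U, key X b σ _ h1 h2 V, hsol]⟩
  · intro σ' hsol
    have h1 : ∀ Y, Y ≠ X → σ' Y = Function.update σ' X (b :: σ' X) Y :=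
      fun Y hY => (Function.update_of_ne hY _ _).symm
    have h2 : b :: σ' X = Function.update σ' X (b :: σ' X) X :=
      (Function.update_self X (b :: σ' X) σ').symm
    have hU := key X b _ σ' h1 h2 U
    have hV := key X b _ σ' h1 h2 V
    exact ⟨hU.symm, hU ▸ hV ▸ hsol⟩
end

section
/- Random-partition compression bound: let w be a word over an alphabet Σ with no two equal adjacent letters (|w| ≥ 2). Partition Σ randomly into (Σ₁, Σ₂) with each letter independently assigned to Σ₁ or Σ₂ with probability 1/2. Divide w into consecutive segments of 3 letters (ignoring a final partial segment). Then for each 3-letter segment abc, the probability that ab ∈ Σ₁Σ₂ or bc ∈ Σ₁Σ₂ is at least 1/2; hence the expected number of positions i with w_i w_{i+1} ∈ Σ₁Σ₂ is at least ⌊|w|/3⌋/2, and consequently there exists a partition (Σ₁, Σ₂) for which at least ⌊|w|/6⌋ disjoint factors of w lie in Σ₁Σ₂. -/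
/-!
For letters `a ≠ b`, exactly a quarter of all partitions `f : A → Bool` put `a` in `Σ₁` and `b`
in `Σ₂`. Summing over the `|w| - 1` adjacent pairs of `w` (all of them with distinct letters),
the total number of cross positions over all partitions is exactly `(|w| - 1) / 4` times the
number of partitions. Since `2 ⌊|w|/3⌋ ≤ |w| - 1` and `4 ⌊|w|/6⌋ ≤ |w| - 1`, this gives the
expectation bound, and some partition is at least as good as the average. For a segment `abc`
the events `ab ∈ Σ₁Σ₂` and `bc ∈ Σ₁Σ₂` are disjoint (they disagree on `b`), so together they
cover exactly half of the partitions.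
-/

open Finset

theorem List.IsChain.rel_of_mem_zip_tail {α : Type*} {R : α → α → Prop} :
    ∀ {l : List α}, l.IsChain R → ∀ p ∈ l.zip l.tail, R p.1 p.2
  | [], _, _, hp | [_], _, _, hp => by simp at hp
  | a :: b :: l, h, p, hp => by
    rw [List.isChain_cons_cons] at h
    rcases List.mem_cons.1 hp with rfl | hp
    · exact h.1
    · exact rel_of_mem_zip_tail h.2 p hp

section Partitions

variable {α : Type*} [Fintype α] [DecidableEq α]

theorem card_filter_apply_eq_and_apply_eq_mul {β : Type*} [Fintype β] [DecidableEq β]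
    {a b : α} (hab : a ≠ b) (x y : β) :
    #{f : α → β | f a = x ∧ f b = y} * Fintype.card β ^ 2 = Fintype.card (α → β) := by
  set s : α → Finset β := Function.update (Function.update (fun _ => univ) a {x}) b {y}
  have hfiber : ({f : α → β | f a = x ∧ f b = y} : Finset _) = Fintype.piFinset s := by
    ext f
    simp only [mem_filter, mem_univ, true_and, Fintype.mem_piFinset, s]
    constructor
    · rintro ⟨rfl, rfl⟩ z
      by_cases hzb : z = b <;> by_cases hza : z = a <;> simp_all
    · intro h
      have ha := h a
      have hb := h b
      simp_all
  have hrest : ∀ j ∈ (univ.erase b).erase a, s j = univ := fun j hj => by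
    simp only [mem_erase] at hj
    simp [s, hj.1, hj.2.1]
  -- split the factors at `b` and `a` off both products; on the remaining indices they agree
  have hmem : a ∈ univ.erase b := mem_erase.2 ⟨hab, mem_univ a⟩
  rw [hfiber, Fintype.card_piFinset, Fintype.card_fun, ← Finset.card_univ (α := β),
    ← Finset.card_univ (α := α), ← prod_const, ← mul_prod_erase univ _ (mem_univ b),
    ← mul_prod_erase _ _ hmem, ← mul_prod_erase univ (fun _ => #univ) (mem_univ b),
    ← mul_prod_erase _ (fun _ => #univ) hmem,
    prod_congr rfl fun j hj => congrArg card (hrest j hj)]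
  simp [s, hab]
  ring

theorem four_mul_card_filter_true_false {a b : α} (hab : a ≠ b) :
    4 * #{f : α → Bool | f a = true ∧ f b = false} = Fintype.card (α → Bool) := by
  rw [← card_filter_apply_eq_and_apply_eq_mul hab, mul_comm]
  rfl

theorem card_le_two_mul_card_filter_cross_or_cross {a b c : α} (hab : a ≠ b) (hbc : b ≠ c) :
    Fintype.card (α → Bool) ≤
      2 * #{f : α → Bool | (f a = true ∧ f b = false) ∨ (f b = true ∧ f c = false)} := by
  have hdisj : Disjoint ({f : α → Bool | f a = true ∧ f b = false} : Finset _)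
      ({f : α → Bool | f b = true ∧ f c = false} : Finset _) := by
    simp only [disjoint_left, mem_filter, mem_univ, true_and]
    rintro f ⟨-, hb⟩ ⟨hb', -⟩
    simp [hb] at hb'
  rw [filter_or, card_union_of_disjoint hdisj]
  have := four_mul_card_filter_true_false hab
  have := four_mul_card_filter_true_false hbc
  omega

theorem four_mul_sum_countP_cross {l : List (α × α)} (hl : ∀ p ∈ l, p.1 ≠ p.2) :
    4 * ∑ f : α → Bool, l.countP (fun p => f p.1 && !f p.2) =
      l.length * Fintype.card (α → Bool) := by
  induction l with
  | nil => simp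
  | cons p l ih =>
    have hcount : ∑ f : α → Bool, (if (f p.1 && !f p.2) = true then 1 else 0) =
        #{f : α → Bool | f p.1 = true ∧ f p.2 = false} := by
      rw [card_filter]
      simp
    have hp := four_mul_card_filter_true_false (hl p List.mem_cons_self)
    simp only [List.countP_cons, List.length_cons, sum_add_distrib, hcount]
    rw [mul_add, ih fun q hq => hl q (List.mem_cons_of_mem p hq), hp]
    ring

end Partitions

theorem stmt18_general {A : Type*} [Fintype A] [DecidableEq A] (w : List A)
    (hadj : w.Chain' (· ≠ ·)) :
    (∀ a b c : A, a ≠ b → b ≠ c →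
      Fintype.card (A → Bool) ≤
        2 * (Finset.univ.filter (fun f : A → Bool =>
          (f a = true ∧ f b = false) ∨ (f b = true ∧ f c = false))).card) ∧
    (Fintype.card (A → Bool) * (w.length / 3) ≤
      2 * ∑ f : A → Bool, (w.zip w.tail).countP (fun p => f p.1 && !f p.2)) ∧
    (∃ f : A → Bool, w.length / 6 ≤ (w.zip w.tail).countP (fun p => f p.1 && !f p.2)) := by
  have htotal := four_mul_sum_countP_cross (List.IsChain.rel_of_mem_zip_tail hadj)
  rw [List.length_zip, List.length_tail, min_eq_right (Nat.sub_le _ 1)] at htotal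
  refine ⟨fun a b c => card_le_two_mul_card_filter_cross_or_cross, ?_, ?_⟩
  · have : 2 * (w.length / 3) ≤ w.length - 1 := by omega
    nlinarith
  · have : 4 * (w.length / 6) ≤ w.length - 1 := by omega
    have hle : ∑ _f : A → Bool, w.length / 6 ≤
        ∑ f : A → Bool, (w.zip w.tail).countP (fun p => f p.1 && !f p.2) := by
      rw [sum_const, card_univ, smul_eq_mul]
      nlinarith
    obtain ⟨f, -, hf⟩ := exists_le_of_sum_le univ_nonempty hle
    exact ⟨f, hf⟩

/-- Random-partition compression bound (partitions Σ = Σ₁ ⊎ Σ₂ encoded as f : A → Bool,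
with f x = true meaning x ∈ Σ₁; a cross position of w is an adjacent pair in Σ₁Σ₂).
For w with no two equal adjacent letters:
(1) for any 3-letter segment abc (a ≠ b, b ≠ c), at least half of all partitions
compress something in it;
(2) the expected number of cross positions is at least ⌊|w|/3⌋ / 2;
(3) hence some partition has at least ⌊|w|/6⌋ (pairwise disjoint) cross factors. -/
theorem stmt18 {A : Type*} [Fintype A] [DecidableEq A] (w : List A)
    (hw : 2 ≤ w.length) (hadj : w.Chain' (· ≠ ·)) :
    (∀ a b c : A, a ≠ b → b ≠ c →
      Fintype.card (A → Bool) ≤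
        2 * (Finset.univ.filter (fun f : A → Bool =>
          (f a = true ∧ f b = false) ∨ (f b = true ∧ f c = false))).card) ∧
    (Fintype.card (A → Bool) * (w.length / 3) ≤
      2 * ∑ f : A → Bool, (w.zip w.tail).countP (fun p => f p.1 && !f p.2)) ∧
    (∃ f : A → Bool, w.length / 6 ≤ (w.zip w.tail).countP (fun p => f p.1 && !f p.2)) :=
  stmt18_general w hadj
end
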